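/- arXiv:2109.03107 — 5 statements merged into one kernel-verified Lean document; each statement's English description precedes it below -/
import Mathlib

section
/- Let g : ℝ → ℝ≥0 be a log-concave function such that E_{x∼N(0,1)}[x·g(x)] = 0. Then E_{x∼N(0,1)}[x²·g(x)] ≤ E_{x∼N(0,1)}[g(x)]. -/
/-! Put `c = E[g]`. Log-concavity makes the superlevel set `{g ≥ c}` an interval, so some
nonzero polynomial `ψ = a x² + b x + d` with `a ≥ 0` satisfies `ψ · (g - c) ≤ 0` everywhere
(`ψ = (x - p)(x - q)` when the interval is `[p, q]`, affine or constant when it is unbounded or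
empty). Since `E[g - c] = E[x (g - c)] = 0` and `E[x²] = 1`, we get
`E[ψ (g - c)] = a (E[x² g] - c) ≤ 0`. If `a > 0` this is the claim; if `a = 0` then `ψ` is affine
with at most one root, so `ψ (g - c) = 0` a.e. forces `g = c` a.e., and then `E[x² g] = c`. -/

open MeasureTheory ProbabilityTheory Real

/-- The standard Gaussian measure `N(0,1)^n` on `Fin n → ℝ`. -/
noncomputable def stdGaussian (n : ℕ) : Measure (Fin n → ℝ) :=
  Measure.pi fun _ => gaussianReal 0 1

/-- The 0/1 indicator function of a set. -/
noncomputable def ind {n : ℕ} (K : Set (Fin n → ℝ)) (x : Fin n → ℝ) : ℝ :=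
  Set.indicator K (fun _ => (1:ℝ)) x

/-- The convex influence of direction `v` on `K`:
`Inf_v[K] = E_{x ∼ N(0,1)^n}[K(x) · (1 - (v·x)²)/√2]`. -/
noncomputable def convInf {n : ℕ} (K : Set (Fin n → ℝ)) (v : Fin n → ℝ) : ℝ :=
  ∫ x, ind K x * ((1 - (∑ i, v i * x i)^2) / Real.sqrt 2) ∂(stdGaussian n)

/-- Total convex influence, defined as the sum of coordinate influences. -/
noncomputable def convTInf {n : ℕ} (K : Set (Fin n → ℝ)) : ℝ :=
  ∑ i : Fin n, convInf K (fun j => if j = i then 1 else 0)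

/-- Total convex influence in integral form:
`TInf[K] = E_{x ∼ N(0,1)^n}[K(x) · (n - ‖x‖²)/√2]`. -/
noncomputable def convTInfI {n : ℕ} (K : Set (Fin n → ℝ)) : ℝ :=
  ∫ x, ind K x * (((n : ℝ) - ∑ i, (x i)^2) / Real.sqrt 2) ∂(stdGaussian n)

/-- Gaussian volume `γ(K)` under `N(0,1)^n`. -/
noncomputable def gvol {n : ℕ} (K : Set (Fin n → ℝ)) : ℝ :=
  (stdGaussian n K).toReal

/-- Variance of the indicator of `K` under the standard Gaussian: `γ(K)(1-γ(K))`. -/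
noncomputable def gvar {n : ℕ} (K : Set (Fin n → ℝ)) : ℝ :=
  gvol K * (1 - gvol K)

open Set

theorem Set.OrdConnected.mem_upperBounds_or_mem_lowerBounds {α : Type*} [LinearOrder α]
    {S : Set α} (hS : S.OrdConnected) {x : α} (hx : x ∉ S) :
    x ∈ upperBounds S ∨ x ∈ lowerBounds S := by
  by_contra! h
  simp only [mem_upperBounds, mem_lowerBounds, not_forall, not_le, exists_prop] at h
  obtain ⟨⟨b, hb, hxb⟩, ⟨a, ha, hax⟩⟩ := h
  exact hx (hS.out ha hb ⟨hax.le, hxb.le⟩)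

theorem Set.OrdConnected.exists_quadratic_nonpos_of_mem_nonneg_of_notMem {S : Set ℝ}
    (hS : S.OrdConnected) :
    ∃ a b c : ℝ, (0 < a ∨ a = 0 ∧ (b ≠ 0 ∨ c ≠ 0)) ∧
      ∀ x, (x ∈ S → a * x ^ 2 + b * x + c ≤ 0) ∧ (x ∉ S → 0 ≤ a * x ^ 2 + b * x + c) := by
  rcases S.eq_empty_or_nonempty with rfl | hne
  · exact ⟨0, 0, 1, by norm_num, fun x => ⟨fun h => h.elim, fun _ => by norm_num⟩⟩
  by_cases hA : BddAbove S <;> by_cases hB : BddBelow S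
  · refine ⟨1, -(sInf S + sSup S), sInf S * sSup S, Or.inl one_pos,
      fun x => ⟨fun hx => ?_, fun hx => ?_⟩⟩
    · nlinarith [csInf_le hB hx, le_csSup hA hx]
    · have hpq := (csInf_le hB hne.some_mem).trans (le_csSup hA hne.some_mem)
      rcases hS.mem_upperBounds_or_mem_lowerBounds hx with hx | hx
      · nlinarith [csSup_le hne hx]
      · nlinarith [le_csInf hne hx]
  · refine ⟨0, 1, -sSup S, by norm_num, fun x => ⟨fun hx => ?_, fun hx => ?_⟩⟩
    · linarith [le_csSup hA hx]
    · rcases hS.mem_upperBounds_or_mem_lowerBounds hx with hx | hx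
      · linarith [csSup_le hne hx]
      · exact absurd ⟨x, hx⟩ hB
  · refine ⟨0, -1, sInf S, by norm_num, fun x => ⟨fun hx => ?_, fun hx => ?_⟩⟩
    · linarith [csInf_le hB hx]
    · rcases hS.mem_upperBounds_or_mem_lowerBounds hx with hx | hx
      · exact absurd ⟨x, hx⟩ hA
      · linarith [le_csInf hne hx]
  · refine ⟨0, 0, -1, by norm_num, fun x => ⟨fun _ => by norm_num, fun hx => ?_⟩⟩
    rcases hS.mem_upperBounds_or_mem_lowerBounds hx with hx | hx
    · exact absurd ⟨x, hx⟩ hA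
    · exact absurd ⟨x, hx⟩ hB

theorem quasiconcaveOn_univ_of_rpow_mul_rpow_le {E : Type*} [AddCommGroup E] [Module ℝ E]
    {g : E → ℝ} (hg0 : ∀ x, 0 ≤ g x)
    (hlc : ∀ x y (θ : ℝ), 0 ≤ θ → θ ≤ 1 → g x ^ θ * g y ^ (1 - θ) ≤ g (θ • x + (1 - θ) • y)) :
    QuasiconcaveOn ℝ univ g := by
  refine quasiconcaveOn_iff_min_le.2 ⟨convex_univ, fun x _ y _ θ η hθ hη hθη => ?_⟩
  obtain rfl : η = 1 - θ := by linarith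
  have hm : 0 ≤ min (g x) (g y) := le_min (hg0 x) (hg0 y)
  calc min (g x) (g y) = min (g x) (g y) ^ θ * min (g x) (g y) ^ (1 - θ) := by
        rw [← rpow_add' hm (by norm_num), add_sub_cancel, rpow_one]
    _ ≤ g x ^ θ * g y ^ (1 - θ) := by
        gcongr
        exacts [rpow_nonneg (hg0 x) _, min_le_left _ _, min_le_right _ _]
    _ ≤ g (θ • x + (1 - θ) • y) := hlc x y θ hθ (by linarith)

theorem integral_sq_gaussianReal (μ : ℝ) (v : NNReal) :
    ∫ x, x ^ 2 ∂gaussianReal μ v = v + μ ^ 2 := by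
  have h := variance_eq_sub (memLp_id_gaussianReal (μ := μ) (v := v) 2)
  simp only [Pi.pow_apply, id_eq] at h
  rw [variance_id_gaussianReal, integral_id_gaussianReal] at h
  linarith

theorem MeasureTheory.Integrable.quadratic_mul {μ : Measure ℝ} {f : ℝ → ℝ}
    (hf : Integrable f μ)
    (hf1 : Integrable (fun x => x * f x) μ) (hf2 : Integrable (fun x => x ^ 2 * f x) μ)
    (a b c : ℝ) : Integrable (fun x => (a * x ^ 2 + b * x + c) * f x) μ := by
  simp_rw [add_mul, mul_assoc]
  exact ((hf2.const_mul a).add (hf1.const_mul b)).add (hf.const_mul c)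

theorem integral_quadratic_mul {μ : Measure ℝ} {f : ℝ → ℝ} (hf : Integrable f μ)
    (hf1 : Integrable (fun x => x * f x) μ) (hf2 : Integrable (fun x => x ^ 2 * f x) μ)
    (a b c : ℝ) : ∫ x, (a * x ^ 2 + b * x + c) * f x ∂μ =
      a * ∫ x, x ^ 2 * f x ∂μ + b * ∫ x, x * f x ∂μ + c * ∫ x, f x ∂μ := by
  simp_rw [add_mul, mul_assoc]
  rw [integral_add, integral_add, integral_const_mul, integral_const_mul, integral_const_mul]
  exacts [hf2.const_mul a, hf1.const_mul b, (hf2.const_mul a).add (hf1.const_mul b),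
    hf.const_mul c]

theorem ae_eq_zero_of_affine_mul_nonpos_of_integral_eq_zero {μ : Measure ℝ}
    [NullSingletonClass μ] {f : ℝ → ℝ} {b c : ℝ} (hbc : b ≠ 0 ∨ c ≠ 0)
    (hle : ∀ x, (b * x + c) * f x ≤ 0) (hI : Integrable (fun x => (b * x + c) * f x) μ)
    (h0 : ∫ x, (b * x + c) * f x ∂μ = 0) : f =ᵐ[μ] 0 := by
  have hroot : {x | b * x + c = 0}.Subsingleton := by
    intro x hx y hy
    rcases eq_or_ne b 0 with rfl | hb
    · exact absurd (by simpa using hx.out) (by simpa using hbc)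
    · exact mul_left_cancel₀ hb (by linarith [hx.out, hy.out] : b * x = b * y)
  have hprod : (fun x => -((b * x + c) * f x)) =ᵐ[μ] 0 :=
    (integral_eq_zero_iff_of_nonneg (fun x => neg_nonneg.2 (hle x)) hI.neg).1
      (by rw [integral_neg, h0, neg_zero])
  filter_upwards [hprod, measure_eq_zero_iff_ae_notMem.1 (hroot.measure_zero μ)] with x hx hxr
  simpa [hxr] using hx

theorem integrable_fun_id_gaussianReal (μ : ℝ) (v : NNReal) :
    Integrable (fun x => x) (gaussianReal μ v) :=
  memLp_one_iff_integrable.1 (memLp_id_gaussianReal 1)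

theorem integrable_sq_gaussianReal (μ : ℝ) (v : NNReal) :
    Integrable (fun x => x ^ 2) (gaussianReal μ v) :=
  (memLp_id_gaussianReal 2).integrable_sq

theorem integrable_sub_integral_gaussianReal {μ : ℝ} {v : NNReal} {g : ℝ → ℝ}
    (hint : Integrable g (gaussianReal μ v))
    (hint1 : Integrable (fun x => x * g x) (gaussianReal μ v))
    (hint2 : Integrable (fun x => x ^ 2 * g x) (gaussianReal μ v)) :
    Integrable (fun x => g x - ∫ y, g y ∂gaussianReal μ v) (gaussianReal μ v) ∧
    Integrable (fun x => x * (g x - ∫ y, g y ∂gaussianReal μ v)) (gaussianReal μ v) ∧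
    Integrable (fun x => x ^ 2 * (g x - ∫ y, g y ∂gaussianReal μ v)) (gaussianReal μ v) := by
  simp_rw [mul_sub]
  exact ⟨hint.sub (integrable_const _),
    hint1.sub ((integrable_fun_id_gaussianReal μ v).mul_const _),
    hint2.sub ((integrable_sq_gaussianReal μ v).mul_const _)⟩

theorem integral_quadratic_mul_sub_integral_gaussianReal {g : ℝ → ℝ}
    (hint : Integrable g (gaussianReal 0 1))
    (hint1 : Integrable (fun x => x * g x) (gaussianReal 0 1))
    (hint2 : Integrable (fun x => x ^ 2 * g x) (gaussianReal 0 1))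
    (hmean : ∫ x, x * g x ∂gaussianReal 0 1 = 0) (a b c : ℝ) :
    ∫ x, (a * x ^ 2 + b * x + c) * (g x - ∫ y, g y ∂gaussianReal 0 1) ∂gaussianReal 0 1 =
      a * ((∫ x, x ^ 2 * g x ∂gaussianReal 0 1) - ∫ x, g x ∂gaussianReal 0 1) := by
  obtain ⟨h0, h1, h2⟩ := integrable_sub_integral_gaussianReal hint hint1 hint2
  rw [integral_quadratic_mul h0 h1 h2]
  simp_rw [mul_sub]
  rw [integral_sub hint (integrable_const _),
    integral_sub hint1 ((integrable_fun_id_gaussianReal 0 1).mul_const _),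
    integral_sub hint2 ((integrable_sq_gaussianReal 0 1).mul_const _), integral_mul_const,
    integral_mul_const, integral_sq_gaussianReal, integral_id_gaussianReal, hmean]
  simp only [integral_const, probReal_univ, smul_eq_mul, NNReal.coe_one]
  ring

/-- For a log-concave `g : ℝ → ℝ≥0` with `E_{x∼N(0,1)}[x·g(x)] = 0`,
we have `E[x²·g(x)] ≤ E[g(x)]`. -/
theorem stmt0 (g : ℝ → ℝ) (hg0 : ∀ x, 0 ≤ g x)
    (hlc : ∀ x y θ : ℝ, 0 ≤ θ → θ ≤ 1 →
      (g x) ^ θ * (g y) ^ (1 - θ) ≤ g (θ * x + (1 - θ) * y))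
    (hint : Integrable g (gaussianReal 0 1))
    (hint1 : Integrable (fun x => x * g x) (gaussianReal 0 1))
    (hint2 : Integrable (fun x => x ^ 2 * g x) (gaussianReal 0 1))
    (hmean : ∫ x, x * g x ∂(gaussianReal 0 1) = 0) :
    ∫ x, x ^ 2 * g x ∂(gaussianReal 0 1) ≤ ∫ x, g x ∂(gaussianReal 0 1) := by
  have horth := integral_quadratic_mul_sub_integral_gaussianReal hint hint1 hint2 hmean
  obtain ⟨h0, h1, h2⟩ := integrable_sub_integral_gaussianReal hint hint1 hint2
  set c := ∫ x, g x ∂gaussianReal 0 1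
  have hS : {x | c ≤ g x}.OrdConnected := by
    simpa [convex_iff_ordConnected] using
      quasiconcaveOn_univ_of_rpow_mul_rpow_le hg0 (by simpa using hlc) c
  obtain ⟨a, b, d, hcoef, hsign⟩ := hS.exists_quadratic_nonpos_of_mem_nonneg_of_notMem
  have hψ : ∀ x, (a * x ^ 2 + b * x + d) * (g x - c) ≤ 0 := fun x => by
    by_cases hx : c ≤ g x
    · exact mul_nonpos_of_nonpos_of_nonneg ((hsign x).1 hx) (sub_nonneg.2 hx)
    · exact mul_nonpos_of_nonneg_of_nonpos ((hsign x).2 hx) (by linarith)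
  rcases hcoef with ha | ⟨rfl, hbd⟩
  · exact sub_nonpos.1 (nonpos_of_mul_nonpos_right
      ((horth a b d).symm.trans_le (integral_nonpos hψ)) ha)
  · have : NullSingletonClass (gaussianReal 0 1) := nullSingletonClass_gaussianReal one_ne_zero
    have hae := ae_eq_zero_of_affine_mul_nonpos_of_integral_eq_zero hbd (by simpa using hψ)
      (by simpa using (h0.quadratic_mul h1 h2 0 b d)) (by simpa using horth 0 b d)
    have hzero : ∫ x, x ^ 2 * (g x - c) ∂gaussianReal 0 1 = 0 := by
      refine integral_eq_zero_of_ae (hae.mono fun x (hx : g x - c = 0) => ?_)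
      simp [hx]
    have := horth 1 0 0
    simp only [one_mul, zero_mul, add_zero, hzero] at this
    linarith
end

section
/- If g : ℝ → ℝ≥0 is log-concave, symmetric (g(x) = g(−x)), and supported in [−c, c], then (∫_{−c}^{c} x² e^{−x²/2} g(x) dx) / (∫_{−c}^{c} e^{−x²/2} g(x) dx) ≤ 1 − (1/(2π)) e^{−c²}, assuming the denominator is positive. -/
open MeasureTheory ProbabilityTheory Real

/-!
With `ε = e^{-c²}/(2π) ≤ e^{-c²/2}` it suffices to show `∫_{[-c,c]} φ g ≥ 0` for
`φ(x) = (1 - ε - x²) e^{-x²/2}`. Since `x e^{-x²/2}` is a primitive of `(1 - x²) e^{-x²/2}`,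
`∫_{-t}^{t} φ ≥ 2t e^{-t²/2} - 2tε ≥ 0` for `0 ≤ t ≤ c`. A log-concave even function is
non-increasing in `|x|`, so its superlevel sets are balanced, hence a.e. symmetric intervals
`[-t, t]`; the layer-cake formula `g(x) = ∫_0^∞ 1[s < g(x)] ds` writes `∫ φ g` as a superposition
of the nonnegative integrals `∫_{-t}^{t} φ`.
-/

lemma hasDerivAt_mul_exp_neg_sq_div_two (x : ℝ) :
    HasDerivAt (fun y => y * exp (-y ^ 2 / 2)) ((1 - x ^ 2) * exp (-x ^ 2 / 2)) x := by
  have h : HasDerivAt (fun y : ℝ => -y ^ 2 / 2) (-x) x :=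
    ((hasDerivAt_pow 2 x).neg.div_const 2).congr_deriv (by ring)
  exact ((hasDerivAt_id' x).mul h.exp).congr_deriv (by ring)

lemma integral_one_sub_sq_mul_exp_neg_sq_div_two (a b : ℝ) :
    ∫ x in a..b, (1 - x ^ 2) * exp (-x ^ 2 / 2) = b * exp (-b ^ 2 / 2) - a * exp (-a ^ 2 / 2) :=
  intervalIntegral.integral_eq_sub_of_hasDerivAt
    (fun x _ => hasDerivAt_mul_exp_neg_sq_div_two x)
    ((by fun_prop : Continuous _).intervalIntegrable _ _)

lemma setIntegral_Icc_one_sub_sub_sq_mul_exp_nonneg {ε t : ℝ} (ht : 0 ≤ t) (hε0 : 0 ≤ ε)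
    (hε : ε ≤ exp (-t ^ 2 / 2)) :
    0 ≤ ∫ x in Set.Icc (-t) t, (1 - ε - x ^ 2) * exp (-x ^ 2 / 2) := by
  rw [integral_Icc_eq_integral_Ioc, ← intervalIntegral.integral_of_le (by linarith)]
  have hle : ∀ x, (1 - x ^ 2) * exp (-x ^ 2 / 2) - ε ≤ (1 - ε - x ^ 2) * exp (-x ^ 2 / 2) := by
    intro x
    have : exp (-x ^ 2 / 2) ≤ 1 := exp_le_one_iff.2 (by nlinarith [sq_nonneg x])
    nlinarith [exp_pos (-x ^ 2 / 2)]
  have hcont : ∀ f : ℝ → ℝ, Continuous f → IntervalIntegrable f volume (-t) t :=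
    fun f hf => hf.intervalIntegrable _ _
  have hmono := intervalIntegral.integral_mono_on (by linarith) (hcont _ (by fun_prop))
    (hcont _ (by fun_prop)) (fun x _ => hle x)
  rw [intervalIntegral.integral_sub (hcont _ (by fun_prop)) (hcont _ (by fun_prop)),
    integral_one_sub_sq_mul_exp_neg_sq_div_two, intervalIntegral.integral_const] at hmono
  simp only [neg_sq, smul_eq_mul] at hmono
  nlinarith

/-- Layer cake: `∫ φ g = ∫_0^M ∫_{g > s} φ ds`. -/
theorem integral_mul_nonneg_of_setIntegral_superlevel_nonneg {α : Type*} [MeasurableSpace α]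
    {μ : Measure α} [SFinite μ] {φ g : α → ℝ} {M : ℝ} (hφ : Integrable φ μ) (hg : Measurable g)
    (hg0 : ∀ x, 0 ≤ g x) (hgM : ∀ x, g x ≤ M)
    (h : ∀ s, 0 < s → 0 ≤ ∫ x in {x | s < g x}, φ x ∂μ) :
    0 ≤ ∫ x, φ x * g x ∂μ := by
  set ν : Measure ℝ := volume.restrict (Set.Ioc 0 M)
  set F : α → ℝ → ℝ := fun x s => if s < g x then φ x else 0
  have hF : Integrable (Function.uncurry F) (μ.prod ν) := by
    have : Function.uncurry F = {p : α × ℝ | p.2 < g p.1}.indicator (fun p => φ p.1) := by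
      ext ⟨x, s⟩
      simp [F, Set.indicator_apply]
    rw [this]
    exact (hφ.comp_fst ν).indicator (measurableSet_lt measurable_snd (hg.comp measurable_fst))
  have hF_s : ∀ x, ∫ s, F x s ∂ν = φ x * g x := by
    intro x
    have hFx : F x = (Set.Iio (g x)).indicator (fun _ => φ x) := by
      ext s
      simp [F, Set.indicator_apply]
    have hset : Set.Iio (g x) ∩ Set.Ioc 0 M = Set.Ioo 0 (g x) := by
      ext s
      simp only [Set.mem_inter_iff, Set.mem_Iio, Set.mem_Ioc, Set.mem_Ioo]
      constructor
      · rintro ⟨h1, h2, -⟩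
        exact ⟨h2, h1⟩
      · rintro ⟨h1, h2⟩
        exact ⟨h2, h1, h2.le.trans (hgM x)⟩
    rw [hFx, integral_indicator measurableSet_Iio, Measure.restrict_restrict measurableSet_Iio,
      hset, setIntegral_const, Real.volume_real_Ioo_of_le (hg0 x), smul_eq_mul, sub_zero, mul_comm]
  have hF_x : ∀ s, ∫ x, F x s ∂μ = ∫ x in {x | s < g x}, φ x ∂μ := by
    intro s
    have hFs : (fun x => F x s) = {x | s < g x}.indicator φ := by
      ext x
      simp [F, Set.indicator_apply]
    rw [hFs, integral_indicator (measurableSet_lt measurable_const hg)]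
  calc 0 ≤ ∫ s, ∫ x, F x s ∂μ ∂ν :=
        setIntegral_nonneg measurableSet_Ioc fun s hs => (hF_x s).symm ▸ h s hs.1
    _ = ∫ x, ∫ s, F x s ∂ν ∂μ := (integral_integral_swap hF).symm
    _ = ∫ x, φ x * g x ∂μ := integral_congr_ae (ae_of_all _ hF_s)

lemma Balanced.ae_eq_Icc_sSup {μ : Measure ℝ} [NullSingletonClass μ] {S : Set ℝ} (hS : Balanced ℝ S)
    (hne : S.Nonempty) (hbdd : BddAbove S) : S =ᵐ[μ] Set.Icc (-sSup S) (sSup S) := by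
  have hsub : S ⊆ Set.Icc (-sSup S) (sSup S) := fun x hx =>
    ⟨neg_le.1 (le_csSup hbdd (hS.neg_mem_iff.2 hx)), le_csSup hbdd hx⟩
  have hsup : Set.Ioo (-sSup S) (sSup S) ⊆ S := by
    intro x hx
    obtain ⟨z, hz, hxz⟩ := exists_lt_of_lt_csSup hne (abs_lt.2 hx)
    have hz0 : 0 < z := (abs_nonneg x).trans_lt hxz
    have : (x / z) • z ∈ S := (balanced_iff_smul_mem.1 hS)
      (by rw [norm_div, Real.norm_eq_abs, Real.norm_eq_abs, abs_of_pos hz0,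
        div_le_one hz0]; exact hxz.le) hz
    rwa [smul_eq_mul, div_mul_cancel₀ x hz0.ne'] at this
  exact hsub.eventuallyLE.antisymm (Ioo_ae_eq_Icc.symm.le.trans hsup.eventuallyLE)

lemma Real.balanced_of_abs_le_mem {S : Set ℝ} (hS : ∀ x ∈ S, ∀ y, |y| ≤ |x| → y ∈ S) :
    Balanced ℝ S :=
  balanced_iff_smul_mem.2 fun a ha x hx => hS x hx _ <| by
    rw [smul_eq_mul, abs_mul]
    exact mul_le_of_le_one_left (abs_nonneg x) ha

lemma Balanced.setIntegral_nonneg {φ : ℝ → ℝ} {S : Set ℝ} {c : ℝ} (hS : Balanced ℝ S)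
    (hSc : S ⊆ Set.Icc (-c) c) (hφ : ∀ t, 0 ≤ t → t ≤ c → 0 ≤ ∫ x in Set.Icc (-t) t, φ x) :
    0 ≤ ∫ x in S, φ x := by
  rcases S.eq_empty_or_nonempty with rfl | hne
  · simp
  have hbdd : BddAbove S := ⟨c, fun x hx => (hSc hx).2⟩
  rw [setIntegral_congr_set (hS.ae_eq_Icc_sSup hne hbdd)]
  exact hφ _ (le_csSup hbdd (hS.zero_mem hne)) (csSup_le hne fun x hx => (hSc hx).2)

lemma le_of_abs_le_of_logConcave_of_even {g : ℝ → ℝ} (hg0 : ∀ x, 0 ≤ g x)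
    (hlc : ∀ x y θ : ℝ, 0 ≤ θ → θ ≤ 1 →
      (g x) ^ θ * (g y) ^ (1 - θ) ≤ g (θ * x + (1 - θ) * y))
    (hsym : ∀ x, g (-x) = g x) {x y : ℝ} (hxy : |x| ≤ |y|) : g y ≤ g x := by
  rcases (abs_nonneg y).eq_or_lt with hy | hy
  · rw [abs_eq_zero.1 (le_antisymm (hy ▸ hxy) (abs_nonneg x)), abs_eq_zero.1 hy.symm]
  have hgy : g |y| = g y := by rcases abs_choice y with h | h <;> simp [h, hsym]
  -- `x` is the convex combination `θ |y| + (1 - θ) (-|y|)` of two points where `g = g y`.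
  set θ := (|y| + x) / (2 * |y|)
  have hθ0 : 0 ≤ θ :=
    div_nonneg (by linarith [neg_abs_le x, neg_le.2 (abs_le.1 hxy).1]) (by positivity)
  have hθ1 : θ ≤ 1 := (div_le_one (by positivity)).2 (by linarith [le_abs_self x])
  have hx : θ * |y| + (1 - θ) * -|y| = x := by simp only [θ]; field_simp; ring
  calc g y = g y ^ (θ + (1 - θ)) := by rw [add_sub_cancel, rpow_one]
    _ = g y ^ θ * g y ^ (1 - θ) := rpow_add' (hg0 y) (by norm_num)
    _ = g |y| ^ θ * g (-|y|) ^ (1 - θ) := by rw [hsym, hgy]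
    _ ≤ g x := hx ▸ hlc _ _ θ hθ0 hθ1

lemma measurable_of_le_of_abs_le {g : ℝ → ℝ} (h : ∀ x y, |x| ≤ |y| → g y ≤ g x) :
    Measurable g := by
  have hanti : Antitone fun u => g (max u 0) := fun a b hab => h _ _ (by
    rw [abs_of_nonneg (le_max_right a 0), abs_of_nonneg (le_max_right b 0)]
    exact max_le_max hab le_rfl)
  have hg : g = (fun u => g (max u 0)) ∘ abs := by
    ext x
    exact le_antisymm (h _ _ (by simp)) (h _ _ (by simp))
  rw [hg]
  exact hanti.measurable.comp measurable_abs

theorem setIntegral_Icc_one_sub_sub_sq_mul_exp_mul_nonneg {g : ℝ → ℝ} {c ε : ℝ}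
    (hg0 : ∀ x, 0 ≤ g x) (hanti : ∀ x y, |x| ≤ |y| → g y ≤ g x) (hε0 : 0 ≤ ε)
    (hε : ε ≤ exp (-c ^ 2 / 2)) :
    0 ≤ ∫ x in Set.Icc (-c) c, (1 - ε - x ^ 2) * exp (-x ^ 2 / 2) * g x := by
  refine integral_mul_nonneg_of_setIntegral_superlevel_nonneg
    (Continuous.integrableOn_Icc (by fun_prop)) (measurable_of_le_of_abs_le hanti) hg0
    (fun x => hanti 0 x (by simp)) fun s _ => ?_
  rw [Measure.restrict_restrict' measurableSet_Icc]
  have hbal : Balanced ℝ ({x | s < g x} ∩ Set.Icc (-c) c) :=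
    Real.balanced_of_abs_le_mem fun x hx y hyx =>
      ⟨hx.1.trans_le (hanti _ _ hyx), abs_le.1 (hyx.trans (abs_le.2 hx.2))⟩
  exact hbal.setIntegral_nonneg Set.inter_subset_right fun t ht htc =>
    setIntegral_Icc_one_sub_sub_sq_mul_exp_nonneg ht hε0
      (hε.trans (exp_le_exp.2 (by nlinarith)))

theorem stmt1_general (c : ℝ) (g : ℝ → ℝ) (hg0 : ∀ x, 0 ≤ g x)
    (hlc : ∀ x y θ : ℝ, 0 ≤ θ → θ ≤ 1 →
      (g x) ^ θ * (g y) ^ (1 - θ) ≤ g (θ * x + (1 - θ) * y))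
    (hsym : ∀ x, g (-x) = g x)
    (hpos : 0 < ∫ x in Set.Icc (-c) c, Real.exp (-x ^ 2 / 2) * g x) :
    (∫ x in Set.Icc (-c) c, x ^ 2 * Real.exp (-x ^ 2 / 2) * g x) /
      (∫ x in Set.Icc (-c) c, Real.exp (-x ^ 2 / 2) * g x)
      ≤ 1 - (1 / (2 * π)) * Real.exp (-c ^ 2) := by
  set ε := (1 / (2 * π)) * exp (-c ^ 2)
  have hε : ε ≤ exp (-c ^ 2 / 2) := by
    have : 1 / (2 * π) ≤ 1 := (div_le_one (by positivity)).2 (by linarith [pi_gt_three])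
    calc ε ≤ 1 * exp (-c ^ 2) := mul_le_mul_of_nonneg_right this (exp_pos _).le
      _ ≤ exp (-c ^ 2 / 2) := by rw [one_mul]; exact exp_le_exp.2 (by nlinarith [sq_nonneg c])
  have hanti : ∀ x y : ℝ, |x| ≤ |y| → g y ≤ g x := fun _ _ =>
    le_of_abs_le_of_logConcave_of_even hg0 hlc hsym
  have hint : ∀ f : ℝ → ℝ, Continuous f → IntegrableOn (fun x => f x * g x) (Set.Icc (-c) c) :=
    fun f hf => hf.integrableOn_Icc.mul_bdd
      (measurable_of_le_of_abs_le hanti).aestronglyMeasurable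
      (ae_of_all _ fun x => (Real.norm_of_nonneg (hg0 x)).trans_le (hanti 0 x (by simp)))
  have hkey := setIntegral_Icc_one_sub_sub_sq_mul_exp_mul_nonneg hg0 hanti (by positivity) hε
  have hsplit : ∫ x in Set.Icc (-c) c, (1 - ε - x ^ 2) * exp (-x ^ 2 / 2) * g x =
      (1 - ε) * (∫ x in Set.Icc (-c) c, exp (-x ^ 2 / 2) * g x) -
        ∫ x in Set.Icc (-c) c, x ^ 2 * exp (-x ^ 2 / 2) * g x := by
    rw [← integral_const_mul, ← integral_sub ((hint _ (by fun_prop)).const_mul _)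
      (hint _ (by fun_prop))]
    congr 1 with x
    ring
  rw [div_le_iff₀ hpos]
  linarith

/-- If `g : ℝ → ℝ≥0` is log-concave, symmetric, supported in `[-c,c]`, then
`(∫_{-c}^{c} x² e^{-x²/2} g) / (∫_{-c}^{c} e^{-x²/2} g) ≤ 1 - (1/(2π)) e^{-c²}`. -/
theorem stmt1 (c : ℝ) (g : ℝ → ℝ) (hg0 : ∀ x, 0 ≤ g x)
    (hlc : ∀ x y θ : ℝ, 0 ≤ θ → θ ≤ 1 →
      (g x) ^ θ * (g y) ^ (1 - θ) ≤ g (θ * x + (1 - θ) * y))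
    (hsym : ∀ x, g (-x) = g x)
    (hsupp : ∀ x, c < |x| → g x = 0)
    (hpos : 0 < ∫ x in Set.Icc (-c) c, Real.exp (-x ^ 2 / 2) * g x) :
    (∫ x in Set.Icc (-c) c, x ^ 2 * Real.exp (-x ^ 2 / 2) * g x) /
      (∫ x in Set.Icc (-c) c, Real.exp (-x ^ 2 / 2) * g x)
      ≤ 1 - (1 / (2 * π)) * Real.exp (-c ^ 2) :=
  stmt1_general c g hg0 hlc hsym hpos
end

section
/- Let K ⊆ ℝⁿ be a symmetric convex set, v ∈ S^{n−1} a unit vector, and c ≥ 0 such that the Gaussian volume of the slab Dict_{cv} := {x : |v·x| ≤ c} equals that of K, i.e., γ(Dict_{cv}) = γ(K). Then Inf_v[K] ≤ Inf_v[Dict_{cv}]. In fact this holds for any Borel measurable set K with γ(K) = γ(Dict_{cv}). -/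
open MeasureTheory ProbabilityTheory Real

/-! Bathtub principle: the weight `(1 - (v·x)²)/√2` is at least `t = (1 - c²)/√2` on the slab
`D` and at most `t` off it. Since `K \ D` and `D \ K` have the same Gaussian measure, trading the
first for the second can only increase the integral of the weight. -/

theorem setIntegral_le_setIntegral_of_measure_eq {α : Type*} [MeasurableSpace α] {μ : Measure α}
    {f : α → ℝ} {K D : Set α} (t : ℝ) (hf : Integrable f μ) (hK : MeasurableSet K)
    (hD : MeasurableSet D) (hfin : μ D ≠ ⊤) (hvol : μ D = μ K)
    (hf_ge : ∀ x ∈ D, t ≤ f x) (hf_le : ∀ x ∉ D, f x ≤ t) :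
    ∫ x in K, f x ∂μ ≤ ∫ x in D, f x ∂μ := by
  have hdiff : μ (K \ D) = μ (D \ K) :=
    measure_sdiff_symm hK.nullMeasurableSet hD.nullMeasurableSet hvol.symm
      (measure_ne_top_of_subset Set.inter_subset_right hfin)
  have hKD_fin : μ (K \ D) ≠ ⊤ := hdiff ▸ measure_ne_top_of_subset Set.sdiff_subset hfin
  calc ∫ x in K, f x ∂μ = (∫ x in K ∩ D, f x ∂μ) + ∫ x in K \ D, f x ∂μ :=
        (integral_inter_add_sdiff hD hf.integrableOn).symm
    _ ≤ (∫ x in K ∩ D, f x ∂μ) + t * μ.real (K \ D) := by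
        gcongr
        rw [mul_comm, ← smul_eq_mul, ← setIntegral_const]
        exact setIntegral_mono_on hf.integrableOn (integrableOn_const hKD_fin) (hK.diff hD)
          fun x hx => hf_le x hx.2
    _ = (∫ x in K ∩ D, f x ∂μ) + t * μ.real (D \ K) := by
        rw [measureReal_def, hdiff, measureReal_def]
    _ ≤ (∫ x in K ∩ D, f x ∂μ) + ∫ x in D \ K, f x ∂μ := by
        gcongr
        exact setIntegral_ge_of_const_le_real (hD.diff hK) (hdiff ▸ hKD_fin)
          (fun x hx => hf_ge x hx.1) hf.integrableOn
    _ = ∫ x in D, f x ∂μ := by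
        rw [Set.inter_comm, integral_inter_add_sdiff hK hf.integrableOn]

instance isProbabilityMeasure_stdGaussian (n : ℕ) : IsProbabilityMeasure (stdGaussian n) := by
  unfold _root_.stdGaussian; infer_instance

theorem integrable_sq_dotProduct_stdGaussian (n : ℕ) (v : Fin n → ℝ) :
    Integrable (fun x : Fin n → ℝ => (∑ i, v i * x i) ^ 2) (stdGaussian n) := by
  have hcoord (i : Fin n) : MemLp (fun x : Fin n → ℝ => x i) 2 (stdGaussian n) :=
    (memLp_id_gaussianReal 2).comp_measurePreserving (measurePreserving_eval _ i)
  exact (memLp_finsetSum _ fun i _ => (hcoord i).const_mul (v i)).integrable_sq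

theorem convInf_eq_setIntegral {n : ℕ} {K : Set (Fin n → ℝ)} (hK : MeasurableSet K)
    (v : Fin n → ℝ) :
    convInf K v = ∫ x in K, (1 - (∑ i, v i * x i) ^ 2) / √2 ∂stdGaussian n := by
  rw [convInf, ← integral_indicator hK]
  congr 1 with x
  by_cases hx : x ∈ K <;> simp [ind, hx]

theorem stmt7_general (n : ℕ) (K : Set (Fin n → ℝ)) (hmeas : MeasurableSet K)
    (v : Fin n → ℝ) (c : ℝ) (hc : 0 ≤ c)
    (hvol : stdGaussian n {x | |∑ i, v i * x i| ≤ c} = stdGaussian n K) :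
    convInf K v ≤ convInf {x | |∑ i, v i * x i| ≤ c} v := by
  have hslab : MeasurableSet {x : Fin n → ℝ | |∑ i, v i * x i| ≤ c} :=
    measurableSet_le (by fun_prop) measurable_const
  rw [convInf_eq_setIntegral hmeas, convInf_eq_setIntegral hslab]
  refine setIntegral_le_setIntegral_of_measure_eq ((1 - c ^ 2) / √2)
    (((integrable_const 1).sub (integrable_sq_dotProduct_stdGaussian n v)).div_const _)
    hmeas hslab (measure_ne_top _ _) hvol (fun x hx => ?_) (fun x hx => ?_)
  · have : (∑ i, v i * x i) ^ 2 ≤ c ^ 2 := sq_le_sq' (abs_le.mp hx).1 (abs_le.mp hx).2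
    gcongr
  · have : c ^ 2 ≤ (∑ i, v i * x i) ^ 2 := by
      rw [← sq_abs (∑ i, v i * x i)]
      exact pow_le_pow_left₀ hc (le_of_not_ge hx) 2
    gcongr

/-- Among all measurable sets of a given Gaussian volume, the slab
`Dict_{cv} = {x : |v·x| ≤ c}` maximizes the convex influence in direction `v`. -/
theorem stmt7 (n : ℕ) (K : Set (Fin n → ℝ)) (hmeas : MeasurableSet K)
    (v : Fin n → ℝ) (hv : ∑ i, (v i) ^ 2 = 1) (c : ℝ) (hc : 0 ≤ c)
    (hvol : stdGaussian n {x | |∑ i, v i * x i| ≤ c} = stdGaussian n K) :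
    convInf K v ≤ convInf {x | |∑ i, v i * x i| ≤ c} v :=
  stmt7_general n K hmeas v c hc hvol
end

section
/- Let K ⊆ ℝⁿ be a Borel measurable set and r ≥ 0 such that γ(B_r) = γ(K), where B_r is the origin-centered Euclidean ball of radius r. Then the total convex influence satisfies TInf[K] ≤ TInf[B_r]. -/
open MeasureTheory ProbabilityTheory Real

/-!
The weight `(n - ‖x‖²)/√2` in `TInf` is a decreasing function of `‖x‖`, so the ball `B_r` is
exactly one of its superlevel sets. This reduces the theorem to the bathtub principle: among
sets of prescribed measure, a superlevel set `B = {f ≥ c}` maximizes `∫_K f`, because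
`∫_K (f - c) ≤ ∫ (f - c)⁺ = ∫_B (f - c)` and the constant `c` contributes the same `c · μ K`
to both sides.
-/

section Bathtub

variable {X : Type*} [MeasurableSpace X] {μ : Measure X} {B : Set X}

lemma setIntegral_le_setIntegral_of_nonneg_on_of_nonpos_off {g : X → ℝ} (hg : Integrable g μ)
    (hB : MeasurableSet B) (hpos : ∀ x ∈ B, 0 ≤ g x) (hneg : ∀ x ∉ B, g x ≤ 0) (K : Set X) :
    ∫ x in K, g x ∂μ ≤ ∫ x in B, g x ∂μ :=
  calc ∫ x in K, g x ∂μ ≤ ∫ x in K, B.indicator g x ∂μ :=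
        setIntegral_mono hg.integrableOn (hg.indicator hB).integrableOn fun x => by
          by_cases hx : x ∈ B
          · simp [hx]
          · simpa [hx] using hneg x hx
    _ ≤ ∫ x, B.indicator g x ∂μ :=
        setIntegral_le_integral (hg.indicator hB) (ae_of_all _ fun x => by
          by_cases hx : x ∈ B
          · simpa [hx] using hpos x hx
          · simp [hx])
    _ = ∫ x in B, g x ∂μ := integral_indicator hB

lemma setIntegral_le_setIntegral_of_measure_eq_s8 [IsFiniteMeasure μ] {f : X → ℝ} {K : Set X}
    (c : ℝ) (hf : Integrable f μ) (hB : MeasurableSet B) (hpos : ∀ x ∈ B, c ≤ f x)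
    (hneg : ∀ x ∉ B, f x ≤ c) (hKB : μ K = μ B) :
    ∫ x in K, f x ∂μ ≤ ∫ x in B, f x ∂μ := by
  have key := setIntegral_le_setIntegral_of_nonneg_on_of_nonpos_off (g := fun x => f x - c)
    (hf.sub (integrable_const c)) hB (fun x hx => sub_nonneg.2 (hpos x hx))
    (fun x hx => sub_nonpos.2 (hneg x hx)) K
  rw [integral_sub hf.integrableOn (integrable_const c).integrableOn,
    integral_sub hf.integrableOn (integrable_const c).integrableOn,
    setIntegral_const, setIntegral_const, measureReal_def, measureReal_def, hKB] at key
  linarith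

end Bathtub

instance (n : ℕ) : IsProbabilityMeasure (stdGaussian n) := by
  unfold _root_.stdGaussian
  infer_instance

lemma integrable_sq_eval_stdGaussian (n : ℕ) (i : Fin n) :
    Integrable (fun x : Fin n → ℝ => x i ^ 2) (stdGaussian n) :=
  (measurePreserving_eval (fun _ => gaussianReal 0 1) i).integrable_comp_of_integrable
    (g := fun y => y ^ 2) (memLp_id_gaussianReal 2).integrable_sq

lemma integrable_tinfWeight (n : ℕ) :
    Integrable (fun x : Fin n → ℝ => ((n : ℝ) - ∑ i, x i ^ 2) / √2) (stdGaussian n) :=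
  ((integrable_const _).sub
    (integrable_finsetSum _ fun i _ => integrable_sq_eval_stdGaussian n i)).div_const _

lemma convTInfI_eq_setIntegral {n : ℕ} {K : Set (Fin n → ℝ)} (hK : MeasurableSet K) :
    convTInfI K = ∫ x in K, ((n : ℝ) - ∑ i, x i ^ 2) / √2 ∂stdGaussian n := by
  rw [← integral_indicator hK, convTInfI]
  congr 1 with x
  by_cases hx : x ∈ K <;> simp [ind, hx]

theorem stmt8_general (n : ℕ) (K : Set (Fin n → ℝ)) (hmeas : MeasurableSet K)
    (r : ℝ)
    (hvol : stdGaussian n {x | ∑ i, (x i) ^ 2 ≤ r ^ 2} = stdGaussian n K) :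
    convTInfI K ≤ convTInfI {x : Fin n → ℝ | ∑ i, (x i) ^ 2 ≤ r ^ 2} := by
  have hball : MeasurableSet {x : Fin n → ℝ | ∑ i, (x i) ^ 2 ≤ r ^ 2} :=
    measurableSet_le (by fun_prop) measurable_const
  rw [convTInfI_eq_setIntegral hmeas, convTInfI_eq_setIntegral hball]
  refine setIntegral_le_setIntegral_of_measure_eq_s8 ((n - r ^ 2) / √2) (integrable_tinfWeight n)
    hball (fun x hx => ?_) (fun x hx => ?_) hvol.symm
  · gcongr
    exact hx
  · gcongr
    exact (not_le.1 hx).le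

/-- Among all measurable sets of a given Gaussian volume, the centered ball
maximizes the total convex influence. -/
theorem stmt8 (n : ℕ) (K : Set (Fin n → ℝ)) (hmeas : MeasurableSet K)
    (r : ℝ) (hr : 0 ≤ r)
    (hvol : stdGaussian n {x | ∑ i, (x i) ^ 2 ≤ r ^ 2} = stdGaussian n K) :
    convTInfI K ≤ convTInfI {x : Fin n → ℝ | ∑ i, (x i) ^ 2 ≤ r ^ 2} :=
  stmt8_general n K hmeas r hvol
end

section
/- Let K ⊆ ℝⁿ be a nonempty symmetric convex set with finite in-radius r_in. Then there exists a unit vector v ∈ S^{n−1} such that K ⊆ {x ∈ ℝⁿ : |v·x| ≤ r_in}. -/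
open MeasureTheory ProbabilityTheory Real

/-!
If `B_t ⊄ closure K` for some `t`, separating a point of `B_t \ closure K` from `K` by
Hahn–Banach gives, thanks to the symmetry of `K`, a unit vector `v` with `|⟪v, x⟫| ≤ t` on `K`.
This happens for every `t > r_in`: a ball inside `closure K` lies in `interior (closure K)`, which
equals `interior K` for convex `K` in finite dimension, so any smaller ball lies in `K`.
The unit normals that work for `t` form a closed subset of the compact sphere, decreasing in `t`,
so some `v` works for all `t > r_in` at once, hence for `r_in` itself.
-/

open Metric Set
open scoped RealInnerProductSpace

theorem Convex.interior_closure_eq_interior {E : Type*} [NormedAddCommGroup E] [NormedSpace ℝ E]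
    [FiniteDimensional ℝ E] {s : Set E} (hs : Convex ℝ s) : interior (closure s) = interior s := by
  rcases (interior s).eq_empty_or_nonempty with h | h
  · rw [h, ← not_nonempty_iff_eq_empty]
    intro hcl
    have hspan : affineSpan ℝ s = ⊤ := top_unique <|
      (isOpen_interior.affineSpan_eq_top hcl).ge.trans <| affineSpan_le.2 <|
        interior_subset.trans <|
          closure_minimal (subset_affineSpan ℝ s) (affineSpan ℝ s).closed_of_finiteDimensional
    exact (hs.interior_nonempty_iff_affineSpan_eq_top.2 hspan).ne_empty h
  · exact hs.interior_closure_eq_interior_of_nonempty_interior h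

section Slabs

variable {E : Type*} [NormedAddCommGroup E] [InnerProductSpace ℝ E]

def ballRadii (K : Set E) : Set ℝ :=
  {r | 0 ≤ r ∧ closedBall (0 : E) r ⊆ K}

def slabNormals (K : Set E) (t : ℝ) : Set E :=
  sphere 0 1 ∩ ⋂ c ∈ K, {v | |⟪v, c⟫| ≤ t}

theorem mem_slabNormals {K : Set E} {t : ℝ} {v : E} :
    v ∈ slabNormals K t ↔ ‖v‖ = 1 ∧ ∀ c ∈ K, |⟪v, c⟫| ≤ t := by
  simp only [slabNormals, mem_inter_iff, mem_sphere_zero_iff_norm, mem_iInter₂, mem_ofPred_eq]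

theorem slabNormals_mono (K : Set E) : Monotone (slabNormals K) := fun _ _ hst _ hv =>
  mem_slabNormals.2
    ⟨(mem_slabNormals.1 hv).1, fun c hc => ((mem_slabNormals.1 hv).2 c hc).trans hst⟩

theorem isClosed_slabNormals (K : Set E) (t : ℝ) : IsClosed (slabNormals K t) :=
  isClosed_sphere.inter <| isClosed_biInter fun _ _ =>
    isClosed_le (continuous_id.inner continuous_const).abs continuous_const

theorem slabNormals_nonempty_of_forall_lt [ProperSpace E] {K : Set E} {r : ℝ}
    (h : ∀ t, r < t → (slabNormals K t).Nonempty) : (slabNormals K r).Nonempty := by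
  have : Nonempty (Ioi r) := ⟨⟨r + 1, by simp⟩⟩
  obtain ⟨v, hv⟩ := IsCompact.nonempty_iInter_of_directed_nonempty_isCompact_isClosed
    (fun t : Ioi r => slabNormals K t) ((slabNormals_mono K).comp (Subtype.mono_coe _)).directed_ge
    (fun t => h t t.2) (fun t => (isCompact_sphere 0 1).of_isClosed_subset
      (isClosed_slabNormals K t) (inter_subset_left (s := sphere 0 1)))
    (fun t => isClosed_slabNormals K t)
  rw [mem_iInter] at hv
  refine ⟨v, mem_slabNormals.2 ⟨(mem_slabNormals.1 (hv ⟨r + 1, by simp⟩)).1, fun c hc => ?_⟩⟩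
  exact le_of_forall_gt_imp_ge_of_dense fun t ht => (mem_slabNormals.1 (hv ⟨t, ht⟩)).2 c hc

theorem exists_mem_slabNormals_norm_of_notMem_closure [CompleteSpace E] {K : Set E}
    (hconv : Convex ℝ K) (hsym : ∀ x ∈ K, -x ∈ K) (hne : K.Nonempty) {x : E}
    (hx : x ∉ closure K) : (slabNormals K ‖x‖).Nonempty := by
  obtain ⟨f, s, hfK, hfx⟩ := geometric_hahn_banach_closed_point hconv.closure isClosed_closure hx
  set w := (InnerProductSpace.toDual ℝ E).symm f
  have hw : ∀ z, ⟪w, z⟫ = f z := fun z => InnerProductSpace.toDual_symm_apply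
  have habs : ∀ c ∈ K, |⟪w, c⟫| < s := fun c hc => abs_lt.2
    ⟨by simpa [hw] using neg_lt_neg (hfK (-c) (subset_closure (hsym c hc))),
      by simpa [hw] using hfK c (subset_closure hc)⟩
  have hwx : s < ‖w‖ * ‖x‖ := hfx.trans_le (hw x ▸ real_inner_le_norm w x)
  obtain ⟨c, hc⟩ := hne
  have hw0 : 0 < ‖w‖ := pos_of_mul_pos_left ((abs_nonneg _).trans_lt ((habs c hc).trans hwx))
    (norm_nonneg x)
  refine ⟨‖w‖⁻¹ • w, mem_slabNormals.2 ⟨?_, fun c hc => ?_⟩⟩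
  · rw [norm_smul, norm_inv, norm_norm, inv_mul_cancel₀ hw0.ne']
  · rw [real_inner_smul_left, abs_mul, abs_inv, abs_norm, inv_mul_le_iff₀ hw0]
    exact ((habs c hc).trans hwx).le

theorem slabNormals_sSup_ballRadii_nonempty [FiniteDimensional ℝ E] {K : Set E}
    (hconv : Convex ℝ K) (hsym : ∀ x ∈ K, -x ∈ K) (h0 : (0 : E) ∈ K)
    (hbdd : BddAbove (ballRadii K)) : (slabNormals K (sSup (ballRadii K))).Nonempty := by
  refine slabNormals_nonempty_of_forall_lt fun t ht => ?_
  have hr : 0 ≤ sSup (ballRadii K) := le_csSup hbdd ⟨le_rfl, by simpa using h0⟩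
  have hball : ¬ closedBall 0 t ⊆ closure K := by
    intro hsub
    have hmid : (sSup (ballRadii K) + t) / 2 ∈ ballRadii K := by
      refine ⟨by linarith, (closedBall_subset_ball (ε₂ := t) (by linarith)).trans ?_⟩
      calc ball 0 t ⊆ interior (closure K) :=
            interior_maximal (ball_subset_closedBall.trans hsub) isOpen_ball
        _ = interior K := hconv.interior_closure_eq_interior
        _ ⊆ K := interior_subset
    have := le_csSup hbdd hmid
    linarith
  obtain ⟨x, hxt, hxK⟩ := not_subset.1 hball
  exact (exists_mem_slabNormals_norm_of_notMem_closure hconv hsym ⟨0, h0⟩ hxK).mono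
    (slabNormals_mono K (mem_closedBall_zero_iff.1 hxt))

end Slabs

theorem ballRadii_preimage_euclideanSpaceEquiv {ι : Type*} [Fintype ι] (K : Set (ι → ℝ)) :
    ballRadii (EuclideanSpace.equiv ι ℝ ⁻¹' K) = {r | 0 ≤ r ∧ {x | ∑ i, x i ^ 2 ≤ r ^ 2} ⊆ K} := by
  ext r
  refine and_congr_right fun hr => ?_
  rw [EuclideanSpace.closedBall_zero_eq r hr]
  exact (EuclideanSpace.equiv ι ℝ).surjective.preimage_subset_preimage_iff
    (s := {x | ∑ i, x i ^ 2 ≤ r ^ 2})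

theorem stmt12_general (n : ℕ) (K : Set (Fin n → ℝ)) (hne : K.Nonempty)
    (hconv : Convex ℝ K) (hsym : ∀ x ∈ K, -x ∈ K)
    (rin : ℝ)
    (hfin : BddAbove {r : ℝ | 0 ≤ r ∧ {x : Fin n → ℝ | ∑ i, (x i) ^ 2 ≤ r ^ 2} ⊆ K})
    (hrin : rin = sSup {r : ℝ | 0 ≤ r ∧ {x : Fin n → ℝ | ∑ i, (x i) ^ 2 ≤ r ^ 2} ⊆ K}) :
    ∃ v : Fin n → ℝ, ∑ i, (v i) ^ 2 = 1 ∧ K ⊆ {x | |∑ i, v i * x i| ≤ rin} := by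
  set e := EuclideanSpace.equiv (Fin n) ℝ
  have h0 : (0 : Fin n → ℝ) ∈ K := by
    obtain ⟨x, hx⟩ := hne
    simpa using hconv hx (hsym x hx) (by norm_num : (0 : ℝ) ≤ 1 / 2)
      (by norm_num : (0 : ℝ) ≤ 1 / 2) (by norm_num)
  rw [← ballRadii_preimage_euclideanSpaceEquiv] at hfin hrin
  obtain ⟨v, hv⟩ := slabNormals_sSup_ballRadii_nonempty (hconv.linear_preimage e.toLinearMap)
    (fun x hx => hsym _ hx) h0 hfin
  obtain ⟨hv1, hvK⟩ := mem_slabNormals.1 hv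
  refine ⟨e v, by simp [e, ← EuclideanSpace.real_norm_sq_eq, hv1], fun x hx => ?_⟩
  have := hvK (WithLp.toLp 2 x) hx
  simpa [e, hrin, PiLp.inner_apply, mul_comm] using this

/-- A nonempty symmetric convex set with finite in-radius `r_in` is contained in
a symmetric slab of half-width `r_in`. -/
theorem stmt12 (n : ℕ) (hn : 0 < n) (K : Set (Fin n → ℝ)) (hne : K.Nonempty)
    (hconv : Convex ℝ K) (hsym : ∀ x ∈ K, -x ∈ K)
    (rin : ℝ)
    (hfin : BddAbove {r : ℝ | 0 ≤ r ∧ {x : Fin n → ℝ | ∑ i, (x i) ^ 2 ≤ r ^ 2} ⊆ K})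
    (hrin : rin = sSup {r : ℝ | 0 ≤ r ∧ {x : Fin n → ℝ | ∑ i, (x i) ^ 2 ≤ r ^ 2} ⊆ K}) :
    ∃ v : Fin n → ℝ, ∑ i, (v i) ^ 2 = 1 ∧ K ⊆ {x | |∑ i, v i * x i| ≤ rin} :=
  stmt12_general n K hne hconv hsym rin hfin hrin
end
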